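/- The one-step bridge transition kernels are consistent with the closed-form marginals: if y_{t-1} ~ N(√ᾱ_{t-1}·y₀ + γ̄_{t-1}·x, (1-ᾱ_{t-1})I) and yₜ | y_{t-1} ~ N(√(1-βₜ)·y_{t-1} + γₜ·x, βₜ·I), then the marginal of yₜ is N(√ᾱₜ·y₀ + γ̄ₜ·x, (1-ᾱₜ)I), where ᾱₜ = (1-βₜ)ᾱ_{t-1} and γ̄ₜ = γₜ + √(1-βₜ)γ̄_{t-1}. -/

import Mathlib

open MeasureTheory ProbabilityTheory
open scoped NNReal

namespace ProbabilityTheory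

variable {Ω : Type*} {mΩ : MeasurableSpace Ω} {P : Measure Ω}

lemma hasLaw_of_map_eq_gaussianReal {X : Ω → ℝ} {μ : ℝ} {v : ℝ≥0}
    (hX : P.map X = gaussianReal μ v) : HasLaw X (gaussianReal μ v) P :=
  ⟨.of_map_ne_zero (hX ▸ IsProbabilityMeasure.ne_zero _), hX⟩

lemma IndepFun.hasLaw_gaussianReal_mul_add_add_mul {X ε : Ω → ℝ} {μ : ℝ} {v : ℝ≥0}
    (hXε : IndepFun X ε P) (hX : HasLaw X (gaussianReal μ v) P)
    (hε : HasLaw ε (gaussianReal 0 1) P) (a b s : ℝ) :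
    HasLaw (fun ω ↦ a * X ω + b + s * ε ω)
      (gaussianReal (a * μ + b) ((a ^ 2).toNNReal * v + (s ^ 2).toNNReal)) P := by
  have h_indep : IndepFun (fun ω ↦ a * X ω + b) (fun ω ↦ s * ε ω) P :=
    hXε.comp (φ := fun y ↦ a * y + b) (ψ := fun y ↦ s * y) (by fun_prop) (by fun_prop)
  have h_sum := h_indep.hasLaw_fun_add (gaussianReal_add_const (gaussianReal_const_mul hX a) b)
    (gaussianReal_const_mul hε s)
  rwa [gaussianReal_conv_gaussianReal, mul_zero, add_zero, mul_one,
    ← Real.toNNReal_of_nonneg, ← Real.toNNReal_of_nonneg] at h_sum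

end ProbabilityTheory

theorem stmt13_general {Ω : Type*} [MeasureSpace Ω]
    (βt αbtm1 γt γbar_tm1 y₀ x : ℝ)
    (hβ : βt ∈ Set.Ioo (0 : ℝ) 1) (hα : αbtm1 ∈ Set.Ioo (0 : ℝ) 1)
    (Y ε : Ω → ℝ)
    (hYlaw : Measure.map Y ℙ
      = gaussianReal (Real.sqrt αbtm1 * y₀ + γbar_tm1 * x) (Real.toNNReal (1 - αbtm1)))
    (hεlaw : Measure.map ε ℙ = gaussianReal 0 1)
    (hindep : IndepFun Y ε ℙ) :
    Measure.map (fun ω => Real.sqrt (1 - βt) * Y ω + γt * x + Real.sqrt βt * ε ω) ℙ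
      = gaussianReal
          (Real.sqrt ((1 - βt) * αbtm1) * y₀ + (γt + Real.sqrt (1 - βt) * γbar_tm1) * x)
          (Real.toNNReal (1 - (1 - βt) * αbtm1)) := by
  obtain ⟨hβ0, hβ1⟩ := hβ
  have hstep := hindep.hasLaw_gaussianReal_mul_add_add_mul (hasLaw_of_map_eq_gaussianReal hYlaw)
    (hasLaw_of_map_eq_gaussianReal hεlaw) (Real.sqrt (1 - βt)) (γt * x) (Real.sqrt βt)
  have hmean : Real.sqrt (1 - βt) * (Real.sqrt αbtm1 * y₀ + γbar_tm1 * x) + γt * x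
      = Real.sqrt ((1 - βt) * αbtm1) * y₀ + (γt + Real.sqrt (1 - βt) * γbar_tm1) * x := by
    rw [Real.sqrt_mul (by linarith)]
    ring
  have hvar : (Real.sqrt (1 - βt) ^ 2).toNNReal * (1 - αbtm1).toNNReal + (Real.sqrt βt ^ 2).toNNReal
      = (1 - (1 - βt) * αbtm1).toNNReal := by
    rw [Real.sq_sqrt (by linarith), Real.sq_sqrt hβ0.le, ← Real.toNNReal_mul (by linarith),
      ← Real.toNNReal_add (by nlinarith [hα.2]) hβ0.le]
    ring_nf
  rw [← hmean, ← hvar]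
  exact hstep.map_eq

/-- one-step bridge kernels are consistent with the closed-form marginals:
    if y_{t-1} ~ N(√ᾱ_{t-1}·y₀ + γ̄_{t-1}·x, 1-ᾱ_{t-1}) and
    yₜ = √(1-βₜ)·y_{t-1} + γₜ·x + √βₜ·ε with ε ~ N(0,1) independent, then
    yₜ ~ N(√ᾱₜ·y₀ + γ̄ₜ·x, 1-ᾱₜ) with ᾱₜ = (1-βₜ)ᾱ_{t-1}, γ̄ₜ = γₜ + √(1-βₜ)γ̄_{t-1}. -/
theorem stmt13 {Ω : Type*} [MeasureSpace Ω] [IsProbabilityMeasure (ℙ : Measure Ω)]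
    (βt αbtm1 γt γbar_tm1 y₀ x : ℝ)
    (hβ : βt ∈ Set.Ioo (0 : ℝ) 1) (hα : αbtm1 ∈ Set.Ioo (0 : ℝ) 1)
    (Y ε : Ω → ℝ) (hY : Measurable Y) (hε : Measurable ε)
    (hYlaw : Measure.map Y ℙ
      = gaussianReal (Real.sqrt αbtm1 * y₀ + γbar_tm1 * x) (Real.toNNReal (1 - αbtm1)))
    (hεlaw : Measure.map ε ℙ = gaussianReal 0 1)
    (hindep : IndepFun Y ε ℙ) :
    Measure.map (fun ω => Real.sqrt (1 - βt) * Y ω + γt * x + Real.sqrt βt * ε ω) ℙ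
      = gaussianReal
          (Real.sqrt ((1 - βt) * αbtm1) * y₀ + (γt + Real.sqrt (1 - βt) * γbar_tm1) * x)
          (Real.toNNReal (1 - (1 - βt) * αbtm1)) :=
  stmt13_general βt αbtm1 γt γbar_tm1 y₀ x hβ hα Y ε hYlaw hεlaw hindep
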